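/- Let P be a lazy, irreducible, aperiodic Markov chain on a finite state space K with stationary distribution π, and let A ⊆ K with 0 < π(A) ≤ 1/2. Then ψ̄_gl(A) ≥ (1/2)·ψ̄_mod(A). -/

import Mathlib

open Finset MeasureTheory

noncomputable section

attribute [local instance] Classical.propDecidable

variable {K : Type*} [Fintype K]

/-- `matPow P t u v` is the `t`-step transition probability from `u` to `v`. -/
def matPow (P : K → K → ℝ) : ℕ → K → K → ℝ
  | 0 => fun u v => if u = v then 1 else 0
  | (t + 1) => fun u v => ∑ w, matPow P t u w * P w v

/-- `P` is a stochastic matrix with (strictly positive) stationary distribution `π`. -/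
structure IsMarkov (P : K → K → ℝ) (π : K → ℝ) : Prop where
  nonneg : ∀ u v, 0 ≤ P u v
  rowSum : ∀ u, ∑ v, P u v = 1
  piPos : ∀ v, 0 < π v
  piSum : ∑ v, π v = 1
  stationary : ∀ v, ∑ u, π u * P u v = π v

/-- `P` is lazy: every holding probability is at least `1/2`. -/
def IsLazy (P : K → K → ℝ) : Prop := ∀ u, (1 : ℝ) / 2 ≤ P u u

/-- irreducibility: every state can reach every other state. -/
def MCIrreducible (P : K → K → ℝ) : Prop := ∀ u v : K, ∃ t : ℕ, 0 < matPow P t u v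

/-- aperiodicity: the gcd of the return times of every state is `1`. -/
def MCAperiodic (P : K → K → ℝ) : Prop :=
  ∀ u : K, ∀ d : ℕ, (∀ t : ℕ, 0 < matPow P t u u → d ∣ t) → d ≤ 1

/-- reversibility: the detailed balance condition. -/
def IsReversible (P : K → K → ℝ) (π : K → ℝ) : Prop :=
  ∀ u v, π u * P u v = π v * P v u

/-- `π`-measure of a set. -/
def meas (π : K → ℝ) (A : Finset K) : ℝ := ∑ v ∈ A, π v

/-- the time reversal `P̄(u,v) = π(v) P(v,u) / π(u)`. -/
def rev (P : K → K → ℝ) (π : K → ℝ) (u v : K) : ℝ := π v * P v u / π u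

/-- transition probability from a point into a set, w.r.t. kernel `R`. -/
def setProb (R : K → K → ℝ) (v : K) (C : Finset K) : ℝ := ∑ c ∈ C, R v c

/-- the level set `A_u = {y : R(y,A) > u}`, w.r.t. kernel `R`. -/
def levelSet (R : K → K → ℝ) (A : Finset K) (u : ℝ) : Finset K :=
  Finset.univ.filter (fun y => u < setProb R y A)

/-- `g` is a fractional subset of `S` of measure `t`. -/
def IsFracSub (π : K → ℝ) (S : Finset K) (g : K → ℝ) (t : ℝ) : Prop :=
  (∀ v, 0 ≤ g v ∧ g v ≤ 1) ∧ (∀ v ∉ S, g v = 0) ∧ ∑ v, g v * π v = t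

/-- ergodic flow from a fractional subset `g` into `C`, w.r.t. kernel `R`. -/
def fracFlow (R : K → K → ℝ) (π : K → ℝ) (g : K → ℝ) (C : Finset K) : ℝ :=
  ∑ v, g v * π v * setProb R v C

/-- `Ψ(t, Aᶜ)` w.r.t. kernel `R`: for `t ≤ π(A)` the minimal flow into `Aᶜ` from a
fractional subset of `A` of measure `t`; for `t > π(A)` the minimal flow into `A`
from a fractional subset of `Aᶜ` of measure `1 − t`. -/
def Psi (R : K → K → ℝ) (π : K → ℝ) (A : Finset K) (t : ℝ) : ℝ :=
  if t ≤ meas π A then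
    sInf {q : ℝ | ∃ g : K → ℝ, IsFracSub π A g t ∧ q = fracFlow R π g Aᶜ}
  else
    sInf {q : ℝ | ∃ g : K → ℝ, IsFracSub π Aᶜ g (1 - t) ∧ q = fracFlow R π g A}

/-- `Ψ_big(t, Aᶜ)` w.r.t. kernel `R`: maximal flow into `Aᶜ` from a fractional
subset of `A` of measure `t`. -/
def PsiSup (R : K → K → ℝ) (π : K → ℝ) (A : Finset K) (t : ℝ) : ℝ :=
  sSup {q : ℝ | ∃ g : K → ℝ, IsFracSub π A g t ∧ q = fracFlow R π g Aᶜ}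

/-- the spread `ψ⁺(A)` (w.r.t. kernel `R`). -/
def psiPlus (R : K → K → ℝ) (π : K → ℝ) (A : Finset K) : ℝ :=
  (∫ t in (0:ℝ)..(meas π A), Psi R π A t) / (meas π A) ^ 2

/-- the quantity `ψ⁻(A)` (w.r.t. kernel `R`). -/
def psiMinus (R : K → K → ℝ) (π : K → ℝ) (A : Finset K) : ℝ :=
  (∫ t in (meas π A)..(1:ℝ), Psi R π A t) / (meas π A) ^ 2

/-- the modified spread `ψ_mod(A)` (w.r.t. kernel `R`). -/
def psiMod (R : K → K → ℝ) (π : K → ℝ) (A : Finset K) : ℝ :=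
  (∫ t in (0:ℝ)..(1:ℝ), Psi R π A t / min t (1 - t)) / meas π A

/-- the global spread `ψ_gl(A)` (w.r.t. kernel `R`). -/
def psiGl (R : K → K → ℝ) (π : K → ℝ) (A : Finset K) : ℝ :=
  (∫ t in (0:ℝ)..(1:ℝ), Psi R π A t) / (meas π A) ^ 2

/-- the quantity `ψ_big(A)` (w.r.t. kernel `R`). -/
def psiBig (R : K → K → ℝ) (π : K → ℝ) (A : Finset K) : ℝ :=
  (∫ t in (0:ℝ)..(meas π A), PsiSup R π A t) / (meas π A) ^ 2

/-- the evolving-set quantity `ψ_evo(A)`, with level sets taken w.r.t. kernel `R`. -/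
def psiEvo (R : K → K → ℝ) (π : K → ℝ) (A : Finset K) : ℝ :=
  1 - ∫ u in (0:ℝ)..(1:ℝ), Real.sqrt (meas π (levelSet R A u) / meas π A)

/-- ergodic flow `Q(B,C)`. -/
def ergFlow (P : K → K → ℝ) (π : K → ℝ) (B C : Finset K) : ℝ :=
  ∑ u ∈ B, ∑ v ∈ C, π u * P u v

/-- conductance `Φ(A)`. -/
def conductance (P : K → K → ℝ) (π : K → ℝ) (A : Finset K) : ℝ :=
  ergFlow P π A Aᶜ / meas π A

def Qone (P : K → K → ℝ) (π : K → ℝ) (C D : Finset K) : ℝ :=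
  ∑ v ∈ C, setProb P v D * π v

def Qtwo (P : K → K → ℝ) (π : K → ℝ) (C D : Finset K) : ℝ :=
  ∑ v ∈ C, Real.sqrt (setProb P v D) * π v

def Qinfty (P : K → K → ℝ) (π : K → ℝ) (C D : Finset K) : ℝ :=
  meas π (C.filter (fun v => 0 < setProb P v D))

/-- discrete gradient `h₁⁺(A)`. -/
def hOneP (P : K → K → ℝ) (π : K → ℝ) (A : Finset K) : ℝ :=
  Qone P π A Aᶜ / min (meas π A) (meas π Aᶜ)

/-- discrete gradient `h₁⁻(A)`. -/
def hOneM (P : K → K → ℝ) (π : K → ℝ) (A : Finset K) : ℝ :=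
  Qone P π Aᶜ A / min (meas π A) (meas π Aᶜ)

/-- discrete gradient `h₂⁺(A)`. -/
def hTwoP (P : K → K → ℝ) (π : K → ℝ) (A : Finset K) : ℝ :=
  Qtwo P π A Aᶜ / min (meas π A) (meas π Aᶜ)

/-- discrete gradient `h₂⁻(A)`. -/
def hTwoM (P : K → K → ℝ) (π : K → ℝ) (A : Finset K) : ℝ :=
  Qtwo P π Aᶜ A / min (meas π A) (meas π Aᶜ)

/-- discrete gradient `h_∞⁺(A)`. -/
def hInfP (P : K → K → ℝ) (π : K → ℝ) (A : Finset K) : ℝ :=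
  Qinfty P π A Aᶜ / min (meas π A) (meas π Aᶜ)

/-- discrete gradient `h_∞⁻(A)`. -/
def hInfM (P : K → K → ℝ) (π : K → ℝ) (A : Finset K) : ℝ :=
  Qinfty P π Aᶜ A / min (meas π A) (meas π Aᶜ)

/-- `p` is a probability distribution. -/
def IsDist (p : K → ℝ) : Prop := (∀ v, 0 ≤ p v) ∧ ∑ v, p v = 1

/-- the distribution after `t` steps starting from `p`. -/
def stepDist (P : K → K → ℝ) (p : K → ℝ) (t : ℕ) (v : K) : ℝ :=
  ∑ u, p u * matPow P t u v

/-- total variation distance. -/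
def tvDist (μ π : K → ℝ) : ℝ := (1 / 2) * ∑ v, |μ v - π v|

/-- chi-square distance. -/
def chi2Dist (μ π : K → ℝ) : ℝ := ∑ v, (μ v / π v - 1) ^ 2 * π v

/-- total variation mixing time `τ(ε)`: the max over initial distributions of the
least time at which total variation distance drops to `ε`. -/
def mixTV (P : K → K → ℝ) (π : K → ℝ) (ε : ℝ) : ℕ :=
  sSup {n : ℕ | ∃ p : K → ℝ, IsDist p ∧
    n = sInf {t : ℕ | tvDist (stepDist P p t) π ≤ ε}}

/-- chi-square mixing time `χ²(ε)`. -/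
def mixChi2 (P : K → K → ℝ) (π : K → ℝ) (ε : ℝ) : ℕ :=
  sSup {n : ℕ | ∃ p : K → ℝ, IsDist p ∧
    n = sInf {t : ℕ | chi2Dist (stepDist P p t) π ≤ ε}}

/-- `π₀ = min_v π(v)`. -/
def piMin (π : K → ℝ) : ℝ := sInf {r : ℝ | ∃ v : K, r = π v}

/-- `ψ⁺(x)`: worst spread over sets of measure at most `x`. -/
def psiPlusSize (R : K → K → ℝ) (π : K → ℝ) (x : ℝ) : ℝ :=
  sInf {r : ℝ | ∃ A : Finset K, 0 < meas π A ∧ meas π A ≤ x ∧ r = psiPlus R π A}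

/-- `ψ_evo(x)`: worst evolving-set quantity over sets of measure at most `x`. -/
def psiEvoSize (R : K → K → ℝ) (π : K → ℝ) (x : ℝ) : ℝ :=
  sInf {r : ℝ | ∃ A : Finset K, 0 < meas π A ∧ meas π A ≤ x ∧ r = psiEvo R π A}

/-- `ψ_big(x)`: worst `ψ_big` over sets of measure at most `x`. -/
def psiBigSize (R : K → K → ℝ) (π : K → ℝ) (x : ℝ) : ℝ :=
  sInf {r : ℝ | ∃ A : Finset K, 0 < meas π A ∧ meas π A ≤ x ∧ r = psiBig R π A}

/-- Dirichlet form. -/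
def dirichletForm (P : K → K → ℝ) (π : K → ℝ) (f : K → ℝ) : ℝ :=
  (1 / 2) * ∑ u, ∑ v, π u * P u v * (f u - f v) ^ 2

/-- variance w.r.t. `π`. -/
def varPi (π : K → ℝ) (f : K → ℝ) : ℝ :=
  ∑ v, π v * f v ^ 2 - (∑ v, π v * f v) ^ 2

/-- the spectral gap `λ`. -/
def specGap (P : K → K → ℝ) (π : K → ℝ) : ℝ :=
  sInf {r : ℝ | ∃ f : K → ℝ, (∃ u v, f u ≠ f v) ∧ r = dirichletForm P π f / varPi π f}

/-- `P_* = 1 − min_{u ∈ A} P(u, A)`. -/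
def Pstar (P : K → K → ℝ) (A : Finset K) : ℝ :=
  1 - sInf {r : ℝ | ∃ u ∈ A, r = setProb P u A}

/-- `P_min = min {P(u,v)/π(v) : u ∈ A, v ∈ Aᶜ, P(u,v) > 0}`. -/
def PminEdge (P : K → K → ℝ) (π : K → ℝ) (A : Finset K) : ℝ :=
  sInf {r : ℝ | ∃ u ∈ A, ∃ v ∈ Aᶜ, 0 < P u v ∧ r = P u v / π v}

/-- `w(t) = inf {y ∈ [0,1] : π(A_y) ≤ t}`. -/
def wfun (R : K → K → ℝ) (π : K → ℝ) (A : Finset K) (t : ℝ) : ℝ :=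
  sInf {y : ℝ | y ∈ Set.Icc (0:ℝ) 1 ∧ meas π (levelSet R A y) ≤ t}

/-!
Write `F(t) = Ψ̄(t, Aᶜ)` and `a = π(A)`. Scaling a fractional subset by `c ∈ [0, 1]` scales both
its measure and its flow by `c`, so `F(t) / t` is nondecreasing on `[0, a]`; the same argument on
`Aᶜ` makes `F(t) / (1 - t)` nonincreasing on `[a, 1]`, the two descriptions of `F(a)` agreeing
because `Q(A, Aᶜ) = Q(Aᶜ, A)` by stationarity. Chebyshev's integral inequality against the weight
`t` on `[0, a]` and against `1 - t` on `[a, 1]` then gives `∫ F ≥ (a / 2) ∫ F / min(t, 1 - t)` on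
each piece.
-/

section FractionalSubsets

variable {R : K → K → ℝ} {π : K → ℝ} {B C : Finset K} {g : K → ℝ} {t c : ℝ}

def fracFlows (R : K → K → ℝ) (π : K → ℝ) (B C : Finset K) (t : ℝ) : Set ℝ :=
  {q | ∃ g : K → ℝ, IsFracSub π B g t ∧ q = fracFlow R π g C}

def minFlow (R : K → K → ℝ) (π : K → ℝ) (B C : Finset K) (t : ℝ) : ℝ :=
  sInf (fracFlows R π B C t)

theorem Psi_eq_ite_minFlow (A : Finset K) (t : ℝ) :
    Psi R π A t = if t ≤ meas π A then minFlow R π A Aᶜ t else minFlow R π Aᶜ A (1 - t) :=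
  rfl

theorem isFracSub_indicator (B : Finset K) :
    IsFracSub π B (fun v => if v ∈ B then 1 else 0) (meas π B) := by
  refine ⟨fun v => ?_, fun v hv => if_neg hv, ?_⟩
  · dsimp only
    split_ifs <;> norm_num
  · simp [meas, ite_mul, Finset.sum_ite_mem]

theorem IsFracSub.const_mul (h : IsFracSub π B g t) (hc0 : 0 ≤ c) (hc1 : c ≤ 1) :
    IsFracSub π B (fun v => c * g v) (c * t) := by
  obtain ⟨hg, hgB, hgt⟩ := h
  refine ⟨fun v => ⟨mul_nonneg hc0 (hg v).1, mul_le_one₀ hc1 (hg v).1 (hg v).2⟩,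
    fun v hv => by simp only [hgB v hv, mul_zero], ?_⟩
  rw [← hgt, Finset.mul_sum]
  simp only [mul_assoc]

theorem IsFracSub.eq_indicator (hπ : ∀ v, 0 < π v) (h : IsFracSub π B g (meas π B)) :
    g = fun v => if v ∈ B then 1 else 0 := by
  obtain ⟨hg, hgB, hgt⟩ := h
  have hsumB : ∑ v ∈ B, g v * π v = ∑ v, g v * π v :=
    Finset.sum_subset (Finset.subset_univ B) fun v _ hv => by rw [hgB v hv, zero_mul]
  have hdefect : ∑ v ∈ B, (1 - g v) * π v = 0 := by
    simp only [sub_mul, one_mul, Finset.sum_sub_distrib, hsumB, hgt, meas, sub_self]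
  have hone := (Finset.sum_eq_zero_iff_of_nonneg fun v _ =>
    mul_nonneg (sub_nonneg.2 (hg v).2) (hπ v).le).1 hdefect
  funext v
  by_cases hv : v ∈ B
  · rw [if_pos hv]
    linarith [(mul_eq_zero.1 (hone v hv)).resolve_right (hπ v).ne']
  · rw [if_neg hv, hgB v hv]

theorem fracFlow_const_mul : fracFlow R π (fun v => c * g v) C = c * fracFlow R π g C := by
  simp only [fracFlow, Finset.mul_sum, mul_assoc]

theorem fracFlow_nonneg (hR : ∀ u v, 0 ≤ R u v) (hπ : ∀ v, 0 ≤ π v) (hg : ∀ v, 0 ≤ g v) :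
    0 ≤ fracFlow R π g C :=
  Finset.sum_nonneg fun v _ =>
    mul_nonneg (mul_nonneg (hg v) (hπ v)) (Finset.sum_nonneg fun c _ => hR v c)

theorem nonneg_of_mem_fracFlows (hR : ∀ u v, 0 ≤ R u v) (hπ : ∀ v, 0 ≤ π v) {q : ℝ}
    (hq : q ∈ fracFlows R π B C t) : 0 ≤ q := by
  obtain ⟨g, hg, rfl⟩ := hq
  exact fracFlow_nonneg hR hπ fun v => (hg.1 v).1

theorem bddBelow_fracFlows (hR : ∀ u v, 0 ≤ R u v) (hπ : ∀ v, 0 ≤ π v) :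
    BddBelow (fracFlows R π B C t) :=
  ⟨0, fun _ => nonneg_of_mem_fracFlows hR hπ⟩

theorem minFlow_nonneg (hR : ∀ u v, 0 ≤ R u v) (hπ : ∀ v, 0 ≤ π v) : 0 ≤ minFlow R π B C t :=
  Real.sInf_nonneg fun _ => nonneg_of_mem_fracFlows hR hπ

theorem minFlow_zero (hR : ∀ u v, 0 ≤ R u v) (hπ : ∀ v, 0 ≤ π v) : minFlow R π B C 0 = 0 := by
  have h0 : (0 : ℝ) ∈ fracFlows R π B C 0 :=
    ⟨0, ⟨fun _ => ⟨le_rfl, zero_le_one⟩, fun _ _ => rfl, by simp⟩, by simp [fracFlow]⟩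
  exact le_antisymm (csInf_le (bddBelow_fracFlows hR hπ) h0) (minFlow_nonneg hR hπ)

theorem minFlow_mul_le (hR : ∀ u v, 0 ≤ R u v) (hπ : ∀ v, 0 ≤ π v) (hB : 0 < meas π B)
    (hc0 : 0 ≤ c) (hc1 : c ≤ 1) (ht0 : 0 ≤ t) (ht : t ≤ meas π B) :
    minFlow R π B C (c * t) ≤ c * minFlow R π B C t := by
  have hne : (fracFlows R π B C t).Nonempty := by
    have hg := (isFracSub_indicator (π := π) B).const_mul (div_nonneg ht0 hB.le)
      ((div_le_one hB).2 ht)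
    rw [div_mul_cancel₀ t hB.ne'] at hg
    exact ⟨_, _, hg, rfl⟩
  change minFlow R π B C (c * t) ≤ c • sInf (fracFlows R π B C t)
  rw [← Real.sInf_smul_of_nonneg hc0]
  refine csInf_le_csInf (bddBelow_fracFlows hR hπ) hne.smul_set ?_
  rintro _ ⟨_, ⟨g, hg, rfl⟩, rfl⟩
  exact ⟨_, hg.const_mul hc0 hc1, fracFlow_const_mul.symm⟩

theorem minFlow_div_monotoneOn (hR : ∀ u v, 0 ≤ R u v) (hπ : ∀ v, 0 ≤ π v)
    (hB : 0 < meas π B) :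
    MonotoneOn (fun t => minFlow R π B C t / t) (Set.Icc 0 (meas π B)) := by
  intro s hs t ht hst
  rcases hs.1.eq_or_lt with rfl | hs0
  · simp only [div_zero]
    exact div_nonneg (minFlow_nonneg hR hπ) ht.1
  have ht0 : 0 < t := hs0.trans_le hst
  have hscale := minFlow_mul_le (C := C) hR hπ hB (div_nonneg hs0.le ht0.le)
    ((div_le_one ht0).2 hst) ht0.le ht.2
  rw [div_mul_cancel₀ s ht0.ne'] at hscale
  rw [div_le_div_iff₀ hs0 ht0]
  calc minFlow R π B C s * t ≤ s / t * minFlow R π B C t * t := by gcongr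
    _ = minFlow R π B C t * s := by field_simp

theorem minFlow_meas (hπ : ∀ v, 0 < π v) :
    minFlow R π B C (meas π B) = fracFlow R π (fun v => if v ∈ B then 1 else 0) C := by
  have hsingle : fracFlows R π B C (meas π B)
      = {fracFlow R π (fun v => if v ∈ B then 1 else 0) C} := by
    ext q
    constructor
    · rintro ⟨g, hg, rfl⟩
      rw [hg.eq_indicator hπ, Set.mem_singleton_iff]
    · rintro rfl
      exact ⟨_, isFracSub_indicator B, rfl⟩
  rw [minFlow, hsingle, csInf_singleton]

end FractionalSubsets

section StationaryFlows

variable {P : K → K → ℝ} {π : K → ℝ}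

theorem meas_nonneg (hM : IsMarkov P π) (B : Finset K) : 0 ≤ meas π B :=
  Finset.sum_nonneg fun v _ => (hM.piPos v).le

theorem meas_compl (hM : IsMarkov P π) (B : Finset K) : meas π Bᶜ = 1 - meas π B := by
  rw [← hM.piSum, ← Finset.sum_add_sum_compl B π, meas, meas]
  ring

theorem ergFlow_add_ergFlow_compl_right (hM : IsMarkov P π) (B C : Finset K) :
    ergFlow P π B C + ergFlow P π B Cᶜ = meas π B := by
  rw [ergFlow, ergFlow, meas, ← Finset.sum_add_distrib]
  refine Finset.sum_congr rfl fun u _ => ?_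
  rw [Finset.sum_add_sum_compl, ← Finset.mul_sum, hM.rowSum, mul_one]

theorem ergFlow_add_ergFlow_compl_left (hM : IsMarkov P π) (B C : Finset K) :
    ergFlow P π B C + ergFlow P π Bᶜ C = meas π C := by
  rw [ergFlow, ergFlow, Finset.sum_add_sum_compl, Finset.sum_comm]
  exact Finset.sum_congr rfl fun v _ => hM.stationary v

theorem ergFlow_compl_comm (hM : IsMarkov P π) (A : Finset K) :
    ergFlow P π Aᶜ A = ergFlow P π A Aᶜ := by
  linarith [ergFlow_add_ergFlow_compl_right hM A A, ergFlow_add_ergFlow_compl_left hM A A]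

theorem rev_nonneg (hM : IsMarkov P π) (u v : K) : 0 ≤ rev P π u v :=
  div_nonneg (mul_nonneg (hM.piPos v).le (hM.nonneg v u)) (hM.piPos u).le

theorem fracFlow_rev_indicator (hπ : ∀ v, 0 < π v) (B C : Finset K) :
    fracFlow (rev P π) π (fun v => if v ∈ B then 1 else 0) C = ergFlow P π C B := by
  rw [ergFlow, Finset.sum_comm]
  simp [fracFlow, setProb, rev, ite_mul, Finset.sum_ite_mem, Finset.mul_sum,
    mul_div_cancel₀ _ (hπ _).ne']

theorem minFlow_rev_meas (hM : IsMarkov P π) (B C : Finset K) :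
    minFlow (rev P π) π B C (meas π B) = ergFlow P π C B := by
  rw [minFlow_meas hM.piPos, fracFlow_rev_indicator hM.piPos]

end StationaryFlows

section Chebyshev

variable {g : ℝ → ℝ} {a b : ℝ}

theorem MonotoneOn.midpoint_mul_integral_le_integral_mul (hab : a ≤ b)
    (hg : MonotoneOn g (Set.Icc a b)) :
    (a + b) / 2 * ∫ t in a..b, g t ≤ ∫ t in a..b, t * g t := by
  set m := (a + b) / 2 with hm_def
  have hm : m ∈ Set.Icc a b := ⟨by linarith, by linarith⟩
  have hgi : IntervalIntegrable g volume a b := (Set.uIcc_of_le hab ▸ hg).intervalIntegrable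
  have htgi : IntervalIntegrable (fun t => t * g t) volume a b :=
    hgi.continuousOn_mul continuousOn_id
  have hidi : IntervalIntegrable (fun t : ℝ => t - m) volume a b :=
    intervalIntegral.intervalIntegrable_id.sub intervalIntegrable_const
  have hsign : 0 ≤ ∫ t in a..b, (t - m) * (g t - g m) := by
    refine intervalIntegral.integral_nonneg hab fun t ht => ?_
    rcases le_total t m with htm | hmt
    · exact mul_nonneg_of_nonpos_of_nonpos (by linarith) (by linarith [hg ht hm htm])
    · exact mul_nonneg (by linarith) (by linarith [hg hm ht hmt])
  have hcentered : ∫ t in a..b, (t - m) = 0 := by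
    rw [intervalIntegral.integral_sub intervalIntegral.intervalIntegrable_id
      intervalIntegrable_const, integral_id, intervalIntegral.integral_const, smul_eq_mul]
    ring
  have hexpand : ∫ t in a..b, (t - m) * (g t - g m)
      = (∫ t in a..b, t * g t) - m * (∫ t in a..b, g t) - g m * ∫ t in a..b, (t - m) := by
    simp only [← intervalIntegral.integral_const_mul]
    rw [← intervalIntegral.integral_sub htgi (hgi.const_mul m),
      ← intervalIntegral.integral_sub (htgi.sub (hgi.const_mul m)) (hidi.const_mul (g m))]
    congr 1 with t
    ring
  rw [hcentered, mul_zero, sub_zero] at hexpand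
  linarith

theorem AntitoneOn.integral_mul_le_midpoint_mul_integral (hab : a ≤ b)
    (hg : AntitoneOn g (Set.Icc a b)) :
    ∫ t in a..b, t * g t ≤ (a + b) / 2 * ∫ t in a..b, g t := by
  have := hg.neg.midpoint_mul_integral_le_integral_mul hab
  simp only [mul_neg, intervalIntegral.integral_neg] at this
  linarith

end Chebyshev

section RatioMonotone

variable {f : ℝ → ℝ} {a : ℝ}

theorem mul_div_self_of_apply_zero (hf0 : f 0 = 0) (t : ℝ) : t * (f t / t) = f t :=
  mul_div_cancel_of_imp' fun ht => by rw [ht, hf0]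

theorem one_sub_mul_div_one_sub_of_apply_one (hf1 : f 1 = 0) (t : ℝ) :
    (1 - t) * (f t / (1 - t)) = f t :=
  mul_div_cancel_of_imp' fun ht => by rwa [show t = 1 by linarith]

theorem intervalIntegrable_of_monotoneOn_div_self (ha : 0 ≤ a) (hf0 : f 0 = 0)
    (hf : MonotoneOn (fun t => f t / t) (Set.Icc 0 a)) : IntervalIntegrable f volume 0 a := by
  have hi : IntervalIntegrable (fun t => t * (f t / t)) volume 0 a :=
    (Set.uIcc_of_le ha ▸ hf).intervalIntegrable.continuousOn_mul continuousOn_id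
  simpa only [mul_div_self_of_apply_zero hf0] using hi

theorem intervalIntegrable_of_antitoneOn_div_one_sub (ha : a ≤ 1) (hf1 : f 1 = 0)
    (hf : AntitoneOn (fun t => f t / (1 - t)) (Set.Icc a 1)) :
    IntervalIntegrable f volume a 1 := by
  have hi : IntervalIntegrable (fun t => (1 - t) * (f t / (1 - t))) volume a 1 :=
    (Set.uIcc_of_le ha ▸ hf).intervalIntegrable.continuousOn_mul (by fun_prop)
  simpa only [one_sub_mul_div_one_sub_of_apply_one hf1] using hi

theorem half_mul_integral_div_self_le_integral (ha : 0 ≤ a) (hf0 : f 0 = 0)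
    (hf : MonotoneOn (fun t => f t / t) (Set.Icc 0 a)) :
    a / 2 * ∫ t in 0..a, f t / t ≤ ∫ t in 0..a, f t := by
  simpa only [zero_add, mul_div_self_of_apply_zero hf0] using
    hf.midpoint_mul_integral_le_integral_mul ha

theorem one_sub_half_mul_integral_div_one_sub_le_integral (ha : a ≤ 1) (hf1 : f 1 = 0)
    (hf : AntitoneOn (fun t => f t / (1 - t)) (Set.Icc a 1)) :
    (1 - a) / 2 * ∫ t in a..1, f t / (1 - t) ≤ ∫ t in a..1, f t := by
  have hgi : IntervalIntegrable (fun t => f t / (1 - t)) volume a 1 :=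
    (Set.uIcc_of_le ha ▸ hf).intervalIntegrable
  have htgi : IntervalIntegrable (fun t => t * (f t / (1 - t))) volume a 1 :=
    hgi.continuousOn_mul continuousOn_id
  have hsplit : ∀ t, f t = f t / (1 - t) - t * (f t / (1 - t)) := fun t => by
    rw [← one_sub_mul, one_sub_mul_div_one_sub_of_apply_one hf1]
  rw [intervalIntegral.integral_congr fun t _ => hsplit t, intervalIntegral.integral_sub hgi htgi]
  linarith [hf.integral_mul_le_midpoint_mul_integral ha]

-- on `[a, 1]` the concave `min t (1 - t)` lies above the chord `a (1 - t) / (1 - a)`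
theorem div_min_le_div_one_sub (ha0 : 0 < a) (ha : a ≤ 1 / 2) {x t : ℝ} (hx : 0 ≤ x)
    (ht : t ∈ Set.Icc a 1) : x / min t (1 - t) ≤ (1 - a) / a * (x / (1 - t)) := by
  rcases eq_or_lt_of_le ht.2 with rfl | ht1
  · simp
  have hmin : 0 < min t (1 - t) := lt_min (by linarith [ht.1]) (by linarith)
  have hchord : a * (1 - t) ≤ (1 - a) * min t (1 - t) := by
    rcases min_cases t (1 - t) with ⟨h, _⟩ | ⟨h, _⟩ <;> rw [h] <;> nlinarith [ht.1]
  have h1t : 0 < 1 - t := by linarith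
  rw [div_le_iff₀ hmin]
  calc x ≤ x * ((1 - a) * min t (1 - t) / (a * (1 - t))) :=
        le_mul_of_one_le_right hx ((one_le_div (by positivity)).2 hchord)
    _ = (1 - a) / a * (x / (1 - t)) * min t (1 - t) := by
        field_simp

theorem half_mul_integral_div_min_le_integral (ha0 : 0 < a) (ha : a ≤ 1 / 2)
    (hf : ∀ t, 0 ≤ f t) (hf0 : f 0 = 0) (hf1 : f 1 = 0)
    (hleft : MonotoneOn (fun t => f t / t) (Set.Icc 0 a))
    (hright : AntitoneOn (fun t => f t / (1 - t)) (Set.Icc a 1)) :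
    a / 2 * ∫ t in 0..1, f t / min t (1 - t) ≤ ∫ t in 0..1, f t := by
  by_cases hg : IntervalIntegrable (fun t => f t / min t (1 - t)) volume 0 1
  swap
  · -- junk value: the integral of a non-integrable function is `0`
    rw [intervalIntegral.integral_undef hg, mul_zero]
    exact intervalIntegral.integral_nonneg zero_le_one fun t _ => hf t
  have ha1 : a ≤ 1 := by linarith
  have ha_mem : a ∈ Set.uIcc 0 1 := Set.mem_uIcc_of_le ha0.le ha1
  have hle_left : a / 2 * ∫ t in 0..a, f t / min t (1 - t) ≤ ∫ t in 0..a, f t := by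
    have hmin : Set.EqOn (fun t => f t / min t (1 - t)) (fun t => f t / t) (Set.uIcc 0 a) :=
      fun t ht => by
        rw [Set.uIcc_of_le ha0.le] at ht
        simp only [min_eq_left (show t ≤ 1 - t by linarith [ht.2])]
    rw [intervalIntegral.integral_congr hmin]
    exact half_mul_integral_div_self_le_integral ha0.le hf0 hleft
  have hle_right : a / 2 * ∫ t in a..1, f t / min t (1 - t) ≤ ∫ t in a..1, f t :=
    calc a / 2 * ∫ t in a..1, f t / min t (1 - t)
        ≤ a / 2 * ∫ t in a..1, (1 - a) / a * (f t / (1 - t)) := by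
          gcongr
          refine intervalIntegral.integral_mono_on ha1
            (hg.mono_set (Set.uIcc_subset_uIcc ha_mem Set.right_mem_uIcc))
            ((Set.uIcc_of_le ha1 ▸ hright).intervalIntegrable.const_mul _) fun t ht => ?_
          exact div_min_le_div_one_sub ha0 ha (hf t) ht
      _ = (1 - a) / 2 * ∫ t in a..1, f t / (1 - t) := by
          rw [intervalIntegral.integral_const_mul]
          field_simp
      _ ≤ ∫ t in a..1, f t := one_sub_half_mul_integral_div_one_sub_le_integral ha1 hf1 hright
  rw [← intervalIntegral.integral_add_adjacent_intervals
      (hg.mono_set (Set.uIcc_subset_uIcc Set.left_mem_uIcc ha_mem))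
      (hg.mono_set (Set.uIcc_subset_uIcc ha_mem Set.right_mem_uIcc)),
    ← intervalIntegral.integral_add_adjacent_intervals
      (intervalIntegrable_of_monotoneOn_div_self ha0.le hf0 hleft)
      (intervalIntegrable_of_antitoneOn_div_one_sub ha1 hf1 hright)]
  linarith

end RatioMonotone

section ReversedSpread

variable {P : K → K → ℝ} {π : K → ℝ} {A : Finset K}

theorem Psi_rev_nonneg (hM : IsMarkov P π) (t : ℝ) : 0 ≤ Psi (rev P π) π A t := by
  rw [Psi_eq_ite_minFlow]
  split_ifs <;> exact minFlow_nonneg (rev_nonneg hM) fun v => (hM.piPos v).le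

theorem Psi_rev_zero (hM : IsMarkov P π) : Psi (rev P π) π A 0 = 0 := by
  rw [Psi_eq_ite_minFlow, if_pos (meas_nonneg hM A),
    minFlow_zero (rev_nonneg hM) fun v => (hM.piPos v).le]

theorem Psi_rev_of_meas_le (hM : IsMarkov P π) {t : ℝ} (ht : meas π A ≤ t) :
    Psi (rev P π) π A t = minFlow (rev P π) π Aᶜ A (1 - t) := by
  rw [Psi_eq_ite_minFlow]
  split_ifs with hle
  · rw [le_antisymm hle ht, minFlow_rev_meas hM, ← meas_compl hM, minFlow_rev_meas hM,
      ergFlow_compl_comm hM]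
  · rfl

theorem Psi_rev_one (hM : IsMarkov P π) : Psi (rev P π) π A 1 = 0 := by
  have hA1 : meas π A ≤ 1 := by linarith [meas_compl hM A, meas_nonneg hM Aᶜ]
  rw [Psi_rev_of_meas_le hM hA1, sub_self,
    minFlow_zero (rev_nonneg hM) fun v => (hM.piPos v).le]

theorem Psi_rev_div_monotoneOn (hM : IsMarkov P π) (hA0 : 0 < meas π A) :
    MonotoneOn (fun t => Psi (rev P π) π A t / t) (Set.Icc 0 (meas π A)) :=
  (minFlow_div_monotoneOn (C := Aᶜ) (rev_nonneg hM) (fun v => (hM.piPos v).le) hA0).congr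
    fun t ht => by simp only [Psi_eq_ite_minFlow, if_pos ht.2]

theorem Psi_rev_div_one_sub_antitoneOn (hM : IsMarkov P π) (hA1 : meas π A < 1) :
    AntitoneOn (fun t => Psi (rev P π) π A t / (1 - t)) (Set.Icc (meas π A) 1) := by
  have hAc : 0 < meas π Aᶜ := by linarith [meas_compl hM A]
  have hmaps : Set.MapsTo (fun t : ℝ => 1 - t) (Set.Icc (meas π A) 1) (Set.Icc 0 (meas π Aᶜ)) :=
    fun t ht => ⟨by linarith [ht.2], by linarith [ht.1, meas_compl hM A]⟩
  refine ((minFlow_div_monotoneOn (C := A) (rev_nonneg hM) (fun v => (hM.piPos v).le)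
    hAc).comp_AntitoneOn (fun s _ t _ hst => by linarith) hmaps).congr fun t ht => ?_
  simp only [Function.comp, Psi_rev_of_meas_le hM ht.1]

end ReversedSpread

theorem global_ge_half_modified_spread_general
    (P : K → K → ℝ) (π : K → ℝ) (A : Finset K)
    (hM : IsMarkov P π)
    (hA0 : 0 < meas π A) (hA : meas π A ≤ 1 / 2) :
    psiGl (rev P π) π A ≥ (1 / 2) * psiMod (rev P π) π A := by
  have hspread := half_mul_integral_div_min_le_integral hA0 hA (Psi_rev_nonneg hM)
    (Psi_rev_zero hM) (Psi_rev_one hM) (Psi_rev_div_monotoneOn hM hA0)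
    (Psi_rev_div_one_sub_antitoneOn hM (by linarith))
  rw [psiGl, psiMod, ge_iff_le, le_div_iff₀ (by positivity)]
  calc 1 / 2 * ((∫ t in (0 : ℝ)..1, Psi (rev P π) π A t / min t (1 - t)) / meas π A)
        * meas π A ^ 2
      = meas π A / 2 * ∫ t in (0 : ℝ)..1, Psi (rev P π) π A t / min t (1 - t) := by
        field_simp
    _ ≤ ∫ t in (0 : ℝ)..1, Psi (rev P π) π A t := hspread

/-- for a lazy, irreducible, aperiodic chain and `0 < π(A) ≤ 1/2`,
`ψ̄_gl(A) ≥ (1/2)·ψ̄_mod(A)`. -/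
theorem global_ge_half_modified_spread
    (P : K → K → ℝ) (π : K → ℝ) (A : Finset K)
    (hM : IsMarkov P π) (hlazy : IsLazy P)
    (hirr : MCIrreducible P) (hap : MCAperiodic P)
    (hA0 : 0 < meas π A) (hA : meas π A ≤ 1 / 2) :
    psiGl (rev P π) π A ≥ (1 / 2) * psiMod (rev P π) π A :=
  global_ge_half_modified_spread_general P π A hM hA0 hA
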